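/- arXiv:1602.07260 — 7 statements merged into one kernel-verified Lean document; each statement's English description precedes it below -/
import Mathlib

section
/- Let p : X̃ → X be a local homeomorphism, f : [0,1] → X a path, and x̃₀ ∈ p⁻¹(f(0)). If there is no lifting of f on all of [0,1] starting at x̃₀, then the set A_f = { t ∈ [0,1] : f|_{[0,t]} has a lifting starting at x̃₀ } equals a half-open interval [0, α) for some α ∈ (0,1]. -/
open unitInterval

/-- The set of `t ∈ [0,1]` such that `f` restricted to `[0,t]` admits a lifting
through `p` starting at `x'₀`. -/
def liftableSet {X' X : Type*} [TopologicalSpace X'] [TopologicalSpace X]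
    (p : X' → X) (f : C(I, X)) (x'₀ : X') : Set I :=
  {t : I | ∃ g : C({s : I // s ≤ t}, X'),
    (∀ s : {s : I // s ≤ t}, p (g s) = f s.1) ∧ g ⟨0, nonneg' (t := t)⟩ = x'₀}

/-!
`A_f` is a lower set containing `0`. If `t ∈ A_f` with `t < 1`, a local inverse of `p` around the
endpoint of a lifting over `[0,t]` continues that lifting a little beyond `t`, so `A_f` has no
largest element once `1 ∉ A_f`. A lower set of `[0,1]` without a largest element is `[0, sup A_f)`.
-/

theorem IsLowerSet.eq_Iio_sSup {α : Type*} [CompleteLinearOrder α] {A : Set α}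
    (hA : IsLowerSet A) (hmax : ∀ a ∈ A, ∃ b ∈ A, a < b) : A = Set.Iio (sSup A) := by
  ext a
  refine ⟨fun ha => ?_, fun ha => ?_⟩
  · obtain ⟨b, hb, hab⟩ := hmax a ha
    exact hab.trans_le (le_sSup hb)
  · obtain ⟨b, hb, hab⟩ := lt_sSup_iff.mp ha
    exact hA hab.le hb

section liftableSet

variable {X' X : Type*} [TopologicalSpace X'] [TopologicalSpace X]
  {p : X' → X} {f : C(I, X)} {x'₀ : X'}

theorem isLowerSet_liftableSet : IsLowerSet (liftableSet p f x'₀) := by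
  rintro t s hst ⟨g, hg, hg0⟩
  exact ⟨g.comp ⟨fun u => ⟨u.1, u.2.trans hst⟩, by fun_prop⟩, fun u => hg _, hg0⟩

theorem zero_mem_liftableSet (hx'₀ : p x'₀ = f 0) : (0 : I) ∈ liftableSet p f x'₀ := by
  refine ⟨ContinuousMap.const _ x'₀, fun s => ?_, rfl⟩
  rw [le_antisymm s.2 nonneg']
  exact hx'₀

theorem exists_lift_of_one_mem_liftableSet (h : (1 : I) ∈ liftableSet p f x'₀) :
    ∃ g : C(I, X'), (∀ t, p (g t) = f t) ∧ g 0 = x'₀ := by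
  obtain ⟨g, hg, hg0⟩ := h
  exact ⟨g.comp ⟨fun t => ⟨t, le_one'⟩, by fun_prop⟩, fun t => hg _, hg0⟩

theorem mem_liftableSet_of_openPartialHomeomorph (e : OpenPartialHomeomorph X' X) {t t' : I}
    (htt' : t ≤ t') (g : C({s : I // s ≤ t}, X')) (hg : ∀ s, e (g s) = f s.1) (hg0 : g ⟨0, nonneg'⟩ = x'₀)
    (hgt : g ⟨t, le_rfl⟩ ∈ e.source) (hf : ∀ s ∈ Set.Icc t t', f s ∈ e.target) :
    t' ∈ liftableSet e f x'₀ := by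
  have hf_max (s : {s : I // s ≤ t'}) : f (max s.1 t) ∈ e.target :=
    hf _ ⟨le_max_right _ _, max_le s.2 htt'⟩
  have hcont : Continuous fun s : {s : I // s ≤ t'} =>
      if s.1 ≤ t then g ⟨min s.1 t, min_le_right _ _⟩ else e.symm (f (max s.1 t)) := by
    refine Continuous.if_le (by fun_prop) ?_ continuous_subtype_val continuous_const ?_
    · exact e.continuousOn_symm.comp_continuous (by fun_prop) hf_max
    · rintro s (hs : s.1 = t)
      simp only [hs, min_self, max_self, ← hg ⟨t, le_rfl⟩, e.left_inv hgt]
  refine ⟨⟨_, hcont⟩, fun s => ?_, ?_⟩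
  · by_cases hst : s.1 ≤ t
    · simp [hst, hg]
    · have hs : max s.1 t = s.1 := max_eq_left (le_of_not_ge hst)
      simpa [hst, hs] using e.right_inv (hf_max s)
  · simpa using hg0

theorem exists_gt_mem_liftableSet (hp : IsLocalHomeomorph p) {t : I}
    (ht : t ∈ liftableSet p f x'₀) (ht1 : t < 1) : ∃ t' > t, t' ∈ liftableSet p f x'₀ := by
  obtain ⟨g, hg, hg0⟩ := ht
  obtain ⟨e, hgt, rfl⟩ := hp (g ⟨t, le_rfl⟩)
  have hft : f t ∈ e.target := hg ⟨t, le_rfl⟩ ▸ e.map_source hgt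
  obtain ⟨u, htu, hu⟩ := exists_Ico_subset_of_mem_nhds
    (f.continuous.continuousAt.preimage_mem_nhds (e.open_target.mem_nhds hft)) ⟨1, ht1⟩
  obtain ⟨t', htt', ht'u⟩ := exists_between htu
  exact ⟨t', htt', mem_liftableSet_of_openPartialHomeomorph e htt'.le g hg hg0 hgt
    fun s hs => hu ⟨hs.1, hs.2.trans_lt ht'u⟩⟩

end liftableSet

/-- if `f` has no lifting on all of `[0,1]` starting at `x'₀`,
then `A_f = [0, α)` for some `α ∈ (0,1]`. -/
theorem stmt_2 {X' X : Type*} [TopologicalSpace X'] [TopologicalSpace X]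
    (p : X' → X) (hp : IsLocalHomeomorph p)
    (f : C(I, X)) (x'₀ : X') (hx'₀ : p x'₀ = f 0)
    (hnolift : ¬ ∃ g : C(I, X'), (∀ t, p (g t) = f t) ∧ g 0 = x'₀) :
    ∃ α : I, 0 < α ∧ liftableSet p f x'₀ = Set.Ico 0 α := by
  have hnoMax : ∀ t ∈ liftableSet p f x'₀, ∃ t' ∈ liftableSet p f x'₀, t < t' := by
    intro t ht
    have ht1 : t < 1 := le_one'.lt_of_ne fun h =>
      hnolift (exists_lift_of_one_mem_liftableSet (h ▸ ht))
    obtain ⟨t', htt', ht'⟩ := exists_gt_mem_liftableSet hp ht ht1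
    exact ⟨t', ht', htt'⟩
  obtain ⟨t', ht', ht'pos⟩ := hnoMax 0 (zero_mem_liftableSet hx'₀)
  refine ⟨sSup (liftableSet p f x'₀), ht'pos.trans_le (le_sSup ht'), ?_⟩
  exact (isLowerSet_liftableSet.eq_Iio_sSup hnoMax).trans
    (Set.ext fun _ => (and_iff_right nonneg').symm)
end

section
/- Let p : X̃ → X be a local homeomorphism with the unique path lifting property, f : [0,1] → X a path, and x̃₀ ∈ p⁻¹(f(0)) such that f has no lifting on [0,1] starting at x̃₀. Let [0,α) = A_f be the set of t for which f|_{[0,t]} has a lifting starting at x̃₀. Then there exists a unique continuous map f̃_α : [0,α) → X̃ with f̃_α(0) = x̃₀ and p ∘ f̃_α = f|_{[0,α)}. -/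
open unitInterval

/-- `p` has the unique path lifting property: two liftings of the same path
that agree at `0` are equal. -/
def UniquePathLifting {X' X : Type*} [TopologicalSpace X'] [TopologicalSpace X]
    (p : X' → X) : Prop :=
  ∀ g₁ g₂ : C(I, X'), (∀ t, p (g₁ t) = p (g₂ t)) → g₁ 0 = g₂ 0 → g₁ = g₂

/-!
The liftings of `f` on the intervals `[0, t]`, `t < α`, agree on their overlaps by unique path
lifting, since every point `s` of such an interval is joined to `0` inside it by `u ↦ min u s`. Each point of
`[0, α)` has a neighbourhood `[0, t]` with `t < α`, so these liftings glue to a continuous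
lifting on `[0, α)`; it is unique by the same argument, `[0, α)` being joined to `0` as well.
-/

theorem joined_zero_of_downClosed {P : I → Prop} (hP : ∀ s, P s → ∀ u ≤ s, P u)
    (s : Subtype P) : Joined (⟨0, hP s s.2 0 nonneg'⟩ : Subtype P) s :=
  ⟨{ toFun := fun u => ⟨min u s, hP s s.2 _ (min_le_right _ _)⟩
     continuous_toFun := (continuous_id.min continuous_const).subtype_mk _
     source' := Subtype.ext (min_eq_left nonneg')
     target' := Subtype.ext (min_eq_right le_one') }⟩

namespace UniquePathLifting

variable {X' X : Type*} [TopologicalSpace X'] [TopologicalSpace X] {p : X' → X}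

theorem apply_eq_of_joined (hu : UniquePathLifting p) {Y : Type*} [TopologicalSpace Y]
    {g₁ g₂ : C(Y, X')} (h : ∀ y, p (g₁ y) = p (g₂ y)) {y₀ y : Y} (hy : Joined y₀ y)
    (h₀ : g₁ y₀ = g₂ y₀) : g₁ y = g₂ y := by
  let γ := hy.somePath
  have hγ := hu (g₁.comp γ) (g₂.comp γ) (fun u => h (γ u)) (by simpa using h₀)
  simpa using DFunLike.congr_fun hγ 1

theorem eq_of_downClosed (hu : UniquePathLifting p) {P : I → Prop}
    (hP : ∀ s, P s → ∀ u ≤ s, P u) (hP₀ : P 0) {g₁ g₂ : C(Subtype P, X')}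
    (h : ∀ s, p (g₁ s) = p (g₂ s)) (h₀ : g₁ ⟨0, hP₀⟩ = g₂ ⟨0, hP₀⟩) : g₁ = g₂ :=
  ContinuousMap.ext fun s => hu.apply_eq_of_joined h (joined_zero_of_downClosed hP s) h₀

theorem lift_Iic_apply_eq (hu : UniquePathLifting p) {f : C(I, X)} {x'₀ : X'} {t₁ t₂ : I}
    {g₁ : C({s : I // s ≤ t₁}, X')} {g₂ : C({s : I // s ≤ t₂}, X')}
    (hg₁ : ∀ s, p (g₁ s) = f s.1) (hg₂ : ∀ s, p (g₂ s) = f s.1)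
    (hg₁₀ : g₁ ⟨0, nonneg'⟩ = x'₀) (hg₂₀ : g₂ ⟨0, nonneg'⟩ = x'₀)
    {s : I} (hs₁ : s ≤ t₁) (hs₂ : s ≤ t₂) : g₁ ⟨s, hs₁⟩ = g₂ ⟨s, hs₂⟩ := by
  let restrict (t : I) (hst : s ≤ t) : C({u : I // u ≤ s}, {u : I // u ≤ t}) :=
    ⟨fun u => ⟨u.1, u.2.trans hst⟩, continuous_subtype_val.subtype_mk _⟩
  have hres : g₁.comp (restrict t₁ hs₁) = g₂.comp (restrict t₂ hs₂) :=
    hu.eq_of_downClosed (fun _ h _ hu => hu.trans h) nonneg'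
      (fun u => (hg₁ _).trans (hg₂ (restrict t₂ hs₂ u)).symm) (hg₁₀.trans hg₂₀.symm)
  exact DFunLike.congr_fun hres ⟨s, le_rfl⟩

theorem exists_lift_Ico (hu : UniquePathLifting p) {f : C(I, X)} {x'₀ : X'} {α : I}
    (hα : 0 < α) (hA : Set.Ico 0 α ⊆ liftableSet p f x'₀) :
    ∃ g : C(Set.Ico (0 : I) α, X'),
      (∀ s : Set.Ico (0 : I) α, p (g s) = f s.1) ∧ g ⟨0, le_refl 0, hα⟩ = x'₀ := by
  choose L hLp hL₀ using fun t : Set.Ico (0 : I) α => hA t.2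
  let S (t : Set.Ico (0 : I) α) : Set (Set.Ico (0 : I) α) := Subtype.val ⁻¹' Set.Iic t.1
  let φ (t : Set.Ico (0 : I) α) : C(S t, X') :=
    (L t).comp ⟨fun s => ⟨s.1.1, s.2⟩, continuous_subtype_val.subtype_val.subtype_mk _⟩
  have hS (s : Set.Ico (0 : I) α) : ∃ t, S t ∈ nhds s := by
    obtain ⟨t, hst, htα⟩ := exists_between s.2.2
    exact ⟨⟨t, nonneg', htα⟩, continuous_subtype_val.continuousAt.preimage_mem_nhds
      (Iic_mem_nhds hst)⟩
  let G := ContinuousMap.liftCover S φ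
    (fun t t' s hs hs' => hu.lift_Iic_apply_eq (hLp t) (hLp t') (hL₀ t) (hL₀ t') hs hs') hS
  have hG (s : Set.Ico (0 : I) α) : G s = L s ⟨s, le_rfl⟩ :=
    ContinuousMap.liftCover_coe (x := (⟨s, le_refl s.1⟩ : S s))
  exact ⟨G, fun s => (congrArg p (hG s)).trans (hLp s _), (hG _).trans (hL₀ _)⟩

end UniquePathLifting

theorem stmt_3_general {X' X : Type*} [TopologicalSpace X'] [TopologicalSpace X]
    (p : X' → X) (hu : UniquePathLifting p)
    (f : C(I, X)) (x'₀ : X')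
    (α : I) (hα : 0 < α) (hA : liftableSet p f x'₀ = Set.Ico 0 α) :
    ∃! g : C(Set.Ico (0 : I) α, X'),
      (∀ s : Set.Ico (0 : I) α, p (g s) = f s.1) ∧ g ⟨0, le_refl 0, hα⟩ = x'₀ := by
  obtain ⟨G, hGp, hG₀⟩ := hu.exists_lift_Ico hα hA.ge
  refine ⟨G, ⟨hGp, hG₀⟩, fun g ⟨hgp, hg₀⟩ => ?_⟩
  exact hu.eq_of_downClosed (fun _ hs _ hus => ⟨nonneg', hus.trans_lt hs.2⟩) ⟨le_rfl, hα⟩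
    (fun s => (hgp s).trans (hGp s).symm) (hg₀.trans hG₀.symm)

/-- the incomplete lifting on `[0, α) = A_f` exists and is unique. -/
theorem stmt_3 {X' X : Type*} [TopologicalSpace X'] [TopologicalSpace X]
    (p : X' → X) (hp : IsLocalHomeomorph p) (hu : UniquePathLifting p)
    (f : C(I, X)) (x'₀ : X') (hx'₀ : p x'₀ = f 0)
    (hnolift : ¬ ∃ g : C(I, X'), (∀ t, p (g t) = f t) ∧ g 0 = x'₀)
    (α : I) (hα : 0 < α) (hA : liftableSet p f x'₀ = Set.Ico 0 α) :
    ∃! g : C(Set.Ico (0 : I) α, X'),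
      (∀ s : Set.Ico (0 : I) α, p (g s) = f s.1) ∧ g ⟨0, le_refl 0, hα⟩ = x'₀ :=
  stmt_3_general p hu f x'₀ α hα hA
end

section
/- Let p : X̃ → X be a closed local homeomorphism from a Hausdorff space X̃ onto a topological space X. Then p has the path lifting property: every path f : [0,1] → X with chosen x̃₀ ∈ p⁻¹(f(0)) admits a continuous lifting f̃ : [0,1] → X̃ starting at x̃₀. -/
open unitInterval

/-- `p` has the path lifting property. -/
def PathLifting {X' X : Type*} [TopologicalSpace X'] [TopologicalSpace X]
    (p : X' → X) : Prop :=
  ∀ (f : C(I, X)) (x'₀ : X'), p x'₀ = f 0 →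
    ∃ g : C(I, X'), (∀ t, p (g t) = f t) ∧ g 0 = x'₀

/-!
Let `b` be the supremum of the times up to which `f` lifts from `x₀`. A lift up to `a` extends
through a chart of `p` at its endpoint for as long as `f` stays in the chart's target, so `b = 1`
once `b` is itself such a time. If `f` is constant just left of `b`, extend a lift through a chart
at an earlier time. Otherwise take times `τₙ → b⁻` with `f τₙ ≠ f b` and lifts `gₙ` up to `τₙ`.
As `p` is closed, `f b = p c` for some `c` in the closure of `{gₙ τₙ}`; `c` is not one of these
points, so in a `T₁` space it is a cluster point of the sequence, and a lift `gₙ` with `gₙ τₙ` in a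
chart at `c` extends up to `b`.
-/

open Filter Set Topology

theorem IsClosedMap.exists_mapClusterPt_of_tendsto {X' X : Type*} [TopologicalSpace X']
    [TopologicalSpace X] [T1Space X'] {p : X' → X} (hp : IsClosedMap p) {u : ℕ → X'} {y : X}
    (hu : Tendsto (p ∘ u) atTop (𝓝 y)) (hne : ∀ n, p (u n) ≠ y) :
    ∃ c, p c = y ∧ MapClusterPt c atTop u := by
  have hy : y ∈ closure (p '' range u) :=
    mem_closure_of_tendsto hu (Eventually.of_forall fun n => ⟨u n, mem_range_self n, rfl⟩)
  obtain ⟨c, hc, rfl⟩ := hp.closure_image_subset _ hy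
  refine ⟨c, rfl, mapClusterPt_atTop_iff_forall_mem_closure.2 fun N => ?_⟩
  have hsplit : range u ⊆ u '' Ici N ∪ u '' Iio N := by
    rintro _ ⟨n, rfl⟩
    rcases le_or_gt N n with h | h
    exacts [Or.inl ⟨n, h, rfl⟩, Or.inr ⟨n, h, rfl⟩]
  have hhead : IsClosed (u '' Iio N) := ((finite_Iio N).image u).isClosed
  have hc' := closure_mono hsplit hc
  rw [closure_union, hhead.closure_eq] at hc'
  rcases hc' with h | ⟨n, -, hn⟩
  · exact h
  · exact absurd (congrArg p hn) (hne n)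

section PathLift

variable {X' X : Type*} [TopologicalSpace X'] [TopologicalSpace X] {p : X' → X} {f : C(I, X)}
  {x₀ : X'}

def IsLiftUpTo (p : X' → X) (f : C(I, X)) (x₀ : X') (t : I) (g : C(I, X')) : Prop :=
  g 0 = x₀ ∧ ∀ s ≤ t, p (g s) = f s

theorem IsLiftUpTo.mono {s t : I} {g : C(I, X')} (hg : IsLiftUpTo p f x₀ t g) (hst : s ≤ t) :
    IsLiftUpTo p f x₀ s g :=
  ⟨hg.1, fun u hu => hg.2 u (hu.trans hst)⟩

theorem isLiftUpTo_zero (h₀ : p x₀ = f 0) : IsLiftUpTo p f x₀ 0 (ContinuousMap.const I x₀) :=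
  ⟨rfl, fun _ hs => le_antisymm hs nonneg' ▸ h₀⟩

theorem IsLiftUpTo.extend {a b : I} {g : C(I, X')} (hg : IsLiftUpTo p f x₀ a g) (hab : a ≤ b)
    (E : OpenPartialHomeomorph X' X) (hE : p = E) (hga : g a ∈ E.source)
    (hf : MapsTo f (Icc a b) E.target) : ∃ h, IsLiftUpTo p f x₀ b h := by
  have hmem : ∀ u, a ≤ u → min u b ∈ Icc a b := fun u hu => ⟨le_min hu hab, min_le_right _ _⟩
  have hcont : Continuous fun u => if u ≤ a then g u else E.symm (f (min u b)) := by
    refine continuous_if_le continuous_id continuous_const g.continuous.continuousOn ?_ ?_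
    · have hfmin : Continuous fun u => f (min u b) := by fun_prop
      exact E.continuousOn_symm.comp hfmin.continuousOn fun u hu => hf (hmem u hu)
    · rintro u rfl
      rw [min_eq_left hab, ← hg.2 u le_rfl, hE, E.left_inv hga]
  refine ⟨⟨_, hcont⟩, by simp [hg.1], fun s hs => ?_⟩
  by_cases hsa : s ≤ a
  · simpa [hsa] using hg.2 s hsa
  · simp only [ContinuousMap.coe_mk, if_neg hsa, min_eq_left hs, hE]
    exact E.right_inv (hf ⟨(not_le.1 hsa).le, hs⟩)

theorem IsLiftUpTo.exists_gt (hp : IsLocalHomeomorph p) {a : I} {g : C(I, X')}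
    (hg : IsLiftUpTo p f x₀ a g) (ha : a < 1) : ∃ b > a, ∃ h, IsLiftUpTo p f x₀ b h := by
  obtain ⟨E, hgE, hE⟩ := hp (g a)
  have hfa : f a ∈ E.target := hg.2 a le_rfl ▸ hE ▸ E.map_source hgE
  obtain ⟨u, hau, hu⟩ := (mem_nhdsGE_iff_exists_Ico_subset' ha).1 <|
    mem_nhdsWithin_of_mem_nhds <| (E.open_target.preimage f.continuous).mem_nhds hfa
  obtain ⟨b, hab, hbu⟩ := exists_between (mem_Ioi.1 hau)
  exact ⟨b, hab, hg.extend hab.le E hE hgE fun t ht => hu ⟨ht.1, ht.2.trans_lt hbu⟩⟩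

theorem exists_isLiftUpTo_of_eventually_eq (hp : IsLocalHomeomorph p) {b : I} (hb : 0 < b)
    (h : ∀ t < b, ∃ g, IsLiftUpTo p f x₀ t g) (hconst : ∀ᶠ t in 𝓝[<] b, f t = f b) :
    ∃ g, IsLiftUpTo p f x₀ b g := by
  obtain ⟨a₀, ha₀, hconst⟩ := (mem_nhdsLT_iff_exists_Ioo_subset' hb).1 hconst
  obtain ⟨a, ha₀a, hab⟩ := exists_between (mem_Iio.1 ha₀)
  obtain ⟨g, hg⟩ := h a hab
  obtain ⟨E, hgE, hE⟩ := hp (g a)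
  have hfa : f a = f b := hconst ⟨ha₀a, hab⟩
  refine hg.extend hab.le E hE hgE fun u hu => ?_
  have hfu : f u = f a := by
    rcases eq_or_lt_of_le hu.2 with rfl | hub
    · exact hfa.symm
    · exact (hconst ⟨ha₀a.trans_le hu.1, hub⟩).trans hfa.symm
  exact hfu ▸ hg.2 a le_rfl ▸ hE ▸ E.map_source hgE

theorem exists_isLiftUpTo_of_frequently_ne [T1Space X'] (hp : IsLocalHomeomorph p)
    (hcl : IsClosedMap p) {b : I} (hb : 0 < b) (h : ∀ t < b, ∃ g, IsLiftUpTo p f x₀ t g)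
    (hne : ∃ᶠ t in 𝓝[<] b, f t ≠ f b) : ∃ g, IsLiftUpTo p f x₀ b g := by
  obtain ⟨τ, hτ, hτb⟩ := exists_seq_forall_of_frequently (hne.and_eventually self_mem_nhdsWithin)
  choose g hg using fun n => h (τ n) (hτb n).2
  have hτ' : Tendsto τ atTop (𝓝 b) := hτ.mono_right nhdsWithin_le_nhds
  obtain ⟨c, hc, hcu⟩ := hcl.exists_mapClusterPt_of_tendsto (u := fun n => g n (τ n))
    (((f.continuous.tendsto b).comp hτ').congr fun n => ((hg n).2 _ le_rfl).symm)
    fun n => (hg n).2 _ le_rfl ▸ (hτb n).1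
  obtain ⟨E, hcE, hE⟩ := hp c
  have hfb : f b ∈ E.target := hc ▸ hE ▸ E.map_source hcE
  obtain ⟨a, hab, ha⟩ := (mem_nhdsLE_iff_exists_Ioc_subset' hb).1 <|
    mem_nhdsWithin_of_mem_nhds <| (E.open_target.preimage f.continuous).mem_nhds hfb
  have hfreq : ∃ᶠ n in atTop, g n (τ n) ∈ E.source :=
    mapClusterPt_iff_frequently.1 hcu _ (E.open_source.mem_nhds hcE)
  obtain ⟨n, hnE, hnτ⟩ := (hfreq.and_eventually (hτ'.eventually (Ioi_mem_nhds hab))).exists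
  exact (hg n).extend (hτb n).2.le E hE hnE fun t ht => ha ⟨hnτ.trans_le ht.1, ht.2⟩

theorem exists_isLiftUpTo_of_forall_lt [T1Space X'] (hp : IsLocalHomeomorph p)
    (hcl : IsClosedMap p) (h₀ : p x₀ = f 0) {b : I} (h : ∀ t < b, ∃ g, IsLiftUpTo p f x₀ t g) :
    ∃ g, IsLiftUpTo p f x₀ b g := by
  rcases eq_or_lt_of_le (nonneg' : 0 ≤ b) with rfl | hb
  · exact ⟨_, isLiftUpTo_zero h₀⟩
  by_cases hne : ∃ᶠ t in 𝓝[<] b, f t ≠ f b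
  · exact exists_isLiftUpTo_of_frequently_ne hp hcl hb h hne
  · rw [not_frequently] at hne
    exact exists_isLiftUpTo_of_eventually_eq hp hb h (hne.mono fun _ => not_not.1)

end PathLift

theorem stmt_6_general {X' X : Type*} [TopologicalSpace X'] [TopologicalSpace X]
    [T2Space X'] (p : X' → X) (hp : IsLocalHomeomorph p)
    (hclosed : IsClosedMap p) :
    PathLifting p := by
  intro f x₀ h₀
  set T : Set I := {t | ∃ g, IsLiftUpTo p f x₀ t g}
  have hlt : ∀ t < sSup T, t ∈ T := fun t ht => by
    obtain ⟨s, ⟨g, hg⟩, hts⟩ := lt_sSup_iff.1 ht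
    exact ⟨g, hg.mono hts.le⟩
  obtain ⟨g, hg⟩ : sSup T ∈ T := exists_isLiftUpTo_of_forall_lt hp hclosed h₀ hlt
  have htop : sSup T = 1 := by
    by_contra hne
    obtain ⟨b, hb, hbT⟩ := hg.exists_gt hp (lt_of_le_of_ne le_one' hne)
    exact (le_sSup (s := T) hbT).not_gt hb
  exact ⟨g, fun t => hg.2 t (htop ▸ le_one'), hg.1⟩

/-- a closed local homeomorphism from a Hausdorff space onto a
space `X` has the path lifting property. -/
theorem stmt_6 {X' X : Type*} [TopologicalSpace X'] [TopologicalSpace X]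
    [T2Space X'] (p : X' → X) (hp : IsLocalHomeomorph p)
    (hclosed : IsClosedMap p) (hsurj : Function.Surjective p) :
    PathLifting p :=
  stmt_6_general p hp hclosed
end

section
/- Every proper local homeomorphism p from a Hausdorff space X̃ onto a Hausdorff space X is a closed map; consequently p has the path lifting and unique path lifting properties (i.e., p is a semicovering map). -/
/-! A proper map is closed, and its fibres are compact; for a local homeomorphism they are also
discrete, hence finite. A closed local homeomorphism with finite fibres out of a Hausdorff space
is a covering map (the fibre over `x` has disjoint neighbourhoods of its points, and closedness
shrinks a neighbourhood of `x` so that its preimage lies in their union), and covering maps lift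
paths, uniquely. -/

open unitInterval

section

variable {E X : Type*} [TopologicalSpace E] [TopologicalSpace X] {p : E → X}

theorem IsLocalHomeomorph.finite_preimage_singleton_of_isProperMap (hp : IsLocalHomeomorph p)
    (hproper : IsProperMap p) (x : X) : (p ⁻¹' {x}).Finite :=
  (hproper.isCompact_preimage isCompact_singleton).finite
    (IsDiscrete.of_openPartialHomeomorph p subset_rfl fun e _ ↦
      let ⟨φ, he, hφ⟩ := hp e; ⟨φ, he, hφ.symm⟩)

theorem IsLocalHomeomorph.isCoveringMap_of_isProperMap [T2Space E] (hp : IsLocalHomeomorph p)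
    (hproper : IsProperMap p) : IsCoveringMap p := by
  rw [isCoveringMap_iff_isCoveringMapOn_univ]
  exact hproper.isClosedMap.isCoveringMapOn_of_isLocalHomeomorphOn
    (fun x _ ↦ hp.finite_preimage_singleton_of_isProperMap hproper x)
    (isLocalHomeomorph_iff_isLocalHomeomorphOn_univ.mp hp)

theorem IsCoveringMap.pathLifting (hp : IsCoveringMap p) : PathLifting p := fun f e he ↦ by
  obtain ⟨g, hg, hg0⟩ := hp.exists_path_lifts f e he.symm
  exact ⟨g, congrFun hg, hg0⟩

theorem IsCoveringMap.uniquePathLifting (hp : IsCoveringMap p) : UniquePathLifting p :=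
  fun g₁ g₂ hg h0 ↦ ContinuousMap.ext <|
    congrFun (hp.eq_of_comp_eq g₁.continuous g₂.continuous (funext hg) 0 h0)

end

theorem stmt_8_general {X' X : Type*} [TopologicalSpace X'] [TopologicalSpace X]
    [T2Space X'] (p : X' → X) (hp : IsLocalHomeomorph p)
    (hproper : IsProperMap p) :
    IsClosedMap p ∧ PathLifting p ∧ UniquePathLifting p :=
  have hcov := hp.isCoveringMap_of_isProperMap hproper
  ⟨hproper.isClosedMap, hcov.pathLifting, hcov.uniquePathLifting⟩

/-- a proper local homeomorphism from a Hausdorff space onto a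
Hausdorff space is a closed map, and has the path lifting and unique path
lifting properties (it is a semicovering map). -/
theorem stmt_8 {X' X : Type*} [TopologicalSpace X'] [TopologicalSpace X]
    [T2Space X'] [T2Space X] (p : X' → X) (hp : IsLocalHomeomorph p)
    (hproper : IsProperMap p) (hsurj : Function.Surjective p) :
    IsClosedMap p ∧ PathLifting p ∧ UniquePathLifting p :=
  stmt_8_general p hp hproper
end

section
/- Let p : (X̃, x̃₀) → (X, x₀) be a semicovering map with X locally path connected, and suppose the index [π₁(X, x₀) : p₊(π₁(X̃, x̃₀))] is finite. Then p is a covering map. -/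
/-!
A path in `X` starting at `x₀` lifts uniquely from any point of the fibre, and by the monodromy
theorem (which only needs unique lifting of paths through a local homeomorphism) the endpoint of
the lift depends only on the homotopy class. Hence two points of the fibre over `x₀` reached from
`x'₀` by paths whose images differ by an element of `p₊ π₁(X', x'₀)` coincide, so the fibre over
`x₀` injects into the coset space of that subgroup and is finite. Lifting a path between two points
of `X` injects one fibre into the other, so every fibre is finite. Over a finite fibre, intersect
the targets of finitely many charts around its points and shrink to a path-connected open `V`:
lifting paths in `V` towards `x` shows that the chart sources, cut down over `V`, are disjoint
and exhaust `p⁻¹ V`, so `V` is evenly covered.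
-/

open unitInterval

attribute [local instance] Path.Homotopic.setoid

section

open Set Function Topology

variable {X' X : Type*} [TopologicalSpace X'] [TopologicalSpace X] {p : X' → X}

theorem IsLocalHomeomorph.discreteTopology_fiber (hp : IsLocalHomeomorph p) (x : X) :
    DiscreteTopology (p ⁻¹' {x}) :=
  (IsDiscrete.of_openPartialHomeomorph p subset_rfl fun e _ ↦
    (hp e).imp fun _ h ↦ ⟨h.1, h.2.symm⟩).1

namespace UniquePathLifting

theorem eq_of_apply_one_eq (hupl : UniquePathLifting p) {g₁ g₂ : C(I, X')}
    (hg : ∀ t, p (g₁ t) = p (g₂ t)) (h1 : g₁ 1 = g₂ 1) : g₁ = g₂ := by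
  let rev : C(I, I) := ⟨σ, continuous_symm⟩
  have hrev : g₁.comp rev = g₂.comp rev :=
    hupl _ _ (fun t ↦ hg (σ t)) (by simpa [rev] using h1)
  ext t
  simpa [rev] using congr($hrev (σ t))

theorem continuous_lift (hupl : UniquePathLifting p) (hp : IsLocalHomeomorph p)
    {A : Type*} [TopologicalSpace A] (f : C(I × A, X)) {g : I × A → X'} (g_lifts : p ∘ g = f)
    (cont_0 : Continuous (g ⟨0, ·⟩)) (cont_A : ∀ a, Continuous (g ⟨·, a⟩)) : Continuous g := by
  rw [continuous_iff_continuousAt]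
  intro ⟨_, a⟩
  obtain ⟨N, haN, g', cont_g', g'_lifts, g'_0, -⟩ :=
    hp.exists_lift_nhds g_lifts cont_0 a (cont_A a)
  refine (cont_g'.congr fun ⟨t, a⟩ ⟨_, ha⟩ ↦ ?_).continuousAt
    (prod_mem_nhds Filter.univ_mem haN)
  have := hupl ⟨_, cont_A a⟩ ⟨_, cont_g'.comp_continuous (.prodMk_left a) fun _ ↦ ⟨⟨⟩, ha⟩⟩
    (fun s ↦ congr_fun (g_lifts.trans g'_lifts.symm) (s, a)) (g'_0 a).symm
  exact congr($this t)

theorem monodromy (hupl : UniquePathLifting p) (hp : IsLocalHomeomorph p) {γ₀ γ₁ : C(I, X)}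
    (γ : γ₀.HomotopyRel γ₁ {0, 1}) (Γ : I → C(I, X')) (Γ_lifts : ∀ t s, p (Γ t s) = γ (t, s))
    (Γ_0 : ∀ t, Γ t 0 = Γ 0 0) (t : I) : Γ t 1 = Γ 0 1 := by
  have cont := hupl.continuous_lift hp (.comp γ .prodSwap) (g := fun st ↦ Γ st.2 st.1)
    (by ext; apply Γ_lifts) (by simp_rw [Γ_0]; exact continuous_const) fun t ↦ (Γ t).2
  have := hp.discreteTopology_fiber (γ₀ 1)
  let Γ_1 : I → p ⁻¹' {γ₀ 1} := fun t ↦ ⟨Γ t 1, by simp [Γ_lifts, γ.eq_fst t (.inr rfl)]⟩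
  exact congr_arg Subtype.val (PreconnectedSpace.constant inferInstance
    (f := Γ_1) ((cont.comp (.prodMk_right 1)).subtype_mk _))

theorem apply_one_eq_of_homotopicRel (hupl : UniquePathLifting p) (hp : IsLocalHomeomorph p)
    (hpl : PathLifting p) {γ₀ γ₁ : C(I, X)} (γ : γ₀.HomotopyRel γ₁ {0, 1}) {g₀ g₁ : C(I, X')}
    (hg₀ : ∀ t, p (g₀ t) = γ₀ t) (hg₁ : ∀ t, p (g₁ t) = γ₁ t) (h0 : g₀ 0 = g₁ 0) :
    g₀ 1 = g₁ 1 := by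
  choose Γ Γ_lifts Γ_0 using fun t ↦
    hpl (γ.curry t) (g₀ 0) (by simp [hg₀, γ.eq_fst t (.inl rfl)])
  have h₀ : Γ 0 = g₀ := hupl _ _ (by simp [Γ_lifts, hg₀]) (Γ_0 0)
  have h₁ : Γ 1 = g₁ := hupl _ _ (by simp [Γ_lifts, hg₁]) ((Γ_0 1).trans h0)
  rw [← h₀, ← h₁]
  exact (hupl.monodromy hp γ Γ Γ_lifts (fun t ↦ (Γ_0 t).trans (Γ_0 0).symm) 1).symm

theorem apply_zero_mem_source_iff (hupl : UniquePathLifting p)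
    {φ : OpenPartialHomeomorph X' X} (hpφ : p = φ) {γ : C(I, X)} (hγ : ∀ t, γ t ∈ φ.target)
    {g : C(I, X')} (hg : ∀ t, p (g t) = γ t) : g 0 ∈ φ.source ↔ g 1 ∈ φ.source := by
  let s : C(I, X') := ⟨fun t ↦ φ.symm (γ t), φ.continuousOn_symm.comp_continuous γ.2 hγ⟩
  have s_lifts (t) : p (g t) = p (s t) := by
    rw [hg, hpφ]
    exact (φ.right_inv (hγ t)).symm
  have s_eq (t) (h : g t ∈ φ.source) : g t = s t := by
    simp only [s, ContinuousMap.coe_mk, ← hg, hpφ, φ.left_inv h]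
  constructor
  · intro h
    rw [hupl g s s_lifts (s_eq 0 h)]
    exact φ.map_target (hγ 1)
  · intro h
    rw [hupl.eq_of_apply_one_eq s_lifts (s_eq 1 h)]
    exact φ.map_target (hγ 0)

end UniquePathLifting

theorem finite_fiber_of_joined (hpl : PathLifting p) (hupl : UniquePathLifting p) {a b : X}
    (hab : Joined a b) [Finite (p ⁻¹' {b})] : Finite (p ⁻¹' {a}) := by
  let δ := hab.somePath
  choose g g_lifts g_0 using fun y : p ⁻¹' {a} ↦
    hpl δ y (by rw [ContinuousMap.coe_coe, δ.source]; exact y.2)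
  refine Finite.of_injective (fun y ↦ (⟨g y 1, by simp [g_lifts]⟩ : p ⁻¹' {b}))
    fun y₁ y₂ h ↦ ?_
  have := hupl.eq_of_apply_one_eq (by simp [g_lifts]) (congr_arg Subtype.val h)
  exact Subtype.ext <| by rw [← g_0, this, g_0]

theorem isEvenlyCovered_of_finite_fiber [LocallyPathConnectedSpace X] (hp : IsLocalHomeomorph p)
    (hpl : PathLifting p) (hupl : UniquePathLifting p) (x : X) [Finite (p ⁻¹' {x})]
    [Nonempty (p ⁻¹' {x})] : IsEvenlyCovered p x (p ⁻¹' {x}) := by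
  have := hp.discreteTopology_fiber x
  have : Nonempty (X → X') := ⟨fun _ ↦ Classical.arbitrary (p ⁻¹' {x})⟩
  choose φ mem_source hpφ using fun y : p ⁻¹' {x} ↦ hp y
  have φ_y (y) : φ y y = x := by rw [← hpφ]; exact y.2
  have fiber_mem_source (y y' : p ⁻¹' {x}) : (y : X') ∈ (φ y').source ↔ y = y' :=
    ⟨fun h ↦ Subtype.ext <| (φ y').injOn h (mem_source y') <| by
      rw [← hpφ]; exact y.2.trans y'.2.symm,
     fun h ↦ h ▸ mem_source y⟩
  obtain ⟨V, ⟨V_open, hxV, V_conn⟩, V_sub⟩ := (isOpen_isPathConnected_basis x).mem_iff.mp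
    ((isOpen_iInter_of_finite fun y ↦ (φ y).open_target).mem_nhds
      (mem_iInter.mpr fun y ↦ φ_y y ▸ (φ y).map_source (mem_source y)))
  have V_target (y) : V ⊆ (φ y).target := V_sub.trans (iInter_subset _ y)
  -- `z` lies in the sheet through the endpoint of its lift of a path to `x` in `V`, and no other.
  have sheet_unique {z : X'} (hz : p z ∈ V) : ∃ y, ∀ y', z ∈ (φ y').source ↔ y = y' := by
    obtain ⟨γ, hγ⟩ := V_conn.joinedIn _ hz _ hxV
    obtain ⟨g, g_lifts, rfl⟩ := hpl γ z (by simp)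
    refine ⟨⟨g 1, by simp [g_lifts]⟩, fun y' ↦ ?_⟩
    rw [hupl.apply_zero_mem_source_iff (hpφ y') (fun t ↦ V_target y' (hγ t)) g_lifts]
    exact fiber_mem_source ⟨g 1, _⟩ y'
  refine .of_trivialization (t := V_open.trivializationDiscrete
    (fun y ↦ (φ y).source ∩ p ⁻¹' V) V (fun y W hW ↦ ?_) (fun y ↦ ?_) (fun y ↦ ?_)
    (fun y₁ y₂ hy ↦ ?_) (fun z hz ↦ ?_)) hxV
  · rw [inter_comm, inter_assoc, ← preimage_inter, inter_eq_right.mpr hW, hpφ y,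
      (show (φ y).IsImage (φ y ⁻¹' W) W from fun _ _ ↦ Iff.rfl).isOpen_iff,
      inter_eq_right.mpr (hW.trans (V_target y))]
  · exact hpφ y ▸ (φ y).injOn.mono inter_subset_left
  · intro v hv
    have hpv : p ((φ y).symm v) = v := by rw [hpφ y, (φ y).right_inv (V_target y hv)]
    exact ⟨(φ y).symm v, ⟨(φ y).map_target (V_target y hv), by rwa [mem_preimage, hpv]⟩, hpv⟩
  · refine disjoint_left.mpr fun z hz₁ hz₂ ↦ hy ?_
    obtain ⟨y, hy⟩ := sheet_unique hz₁.2
    exact ((hy y₁).mp hz₁.1).symm.trans ((hy y₂).mp hz₂.1)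
  · obtain ⟨y, hy⟩ := sheet_unique hz
    exact mem_iUnion.mpr ⟨y, (hy y).mpr rfl, hz⟩

open PathConnectedSpace (somePath) in
theorem finite_fiber_of_finiteIndex [PathConnectedSpace X'] (hp : IsLocalHomeomorph p)
    (hpl : PathLifting p) (hupl : UniquePathLifting p) {x'₀ : X'} {x₀ : X} (hx'₀ : p x'₀ = x₀)
    (H : Subgroup (FundamentalGroup X x₀))
    (hH : ∀ g : FundamentalGroup X x₀, g ∈ H ↔
      ∃ α' : Path x'₀ x'₀, g = FundamentalGroup.fromPath (X := TopCat.of X)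
        ⟦(α'.map hp.continuous).cast hx'₀.symm hx'₀.symm⟧)
    [H.FiniteIndex] : Finite (p ⁻¹' {x₀}) := by
  have : Finite (FundamentalGroup X x₀ ⧸ H) := H.finite_quotient_of_finiteIndex
  let P (y : p ⁻¹' {x₀}) : Path x₀ x₀ :=
    ((somePath x'₀ y).map hp.continuous).cast hx'₀.symm y.2.symm
  refine Finite.of_injective (fun y ↦ (FundamentalGroup.fromPath ⟦P y⟧ : FundamentalGroup X x₀ ⧸ H))
    fun y₁ y₂ hy ↦ ?_
  obtain ⟨α', hα'⟩ := (hH _).mp (QuotientGroup.eq.mp hy)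
  obtain ⟨F⟩ : Path.Homotopic (P y₂)
      (((α'.map hp.continuous).cast hx'₀.symm hx'₀.symm).trans (P y₁)) :=
    Quotient.exact (inv_mul_eq_iff_eq_mul.mp hα')
  have := hupl.apply_one_eq_of_homotopicRel hp hpl F (g₀ := somePath x'₀ y₂)
    (g₁ := α'.trans (somePath x'₀ y₁)) (fun t ↦ by simp [P])
    (fun t ↦ by simp [P, Path.trans_apply]; split_ifs <;> rfl) (by simp)
  exact Subtype.ext (by simpa using this.symm)

end

/-- a semicovering map onto a locally path connected space whose
image subgroup `p₊(π₁(X', x'₀))` (formalized as the subgroup `H` of classes of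
loops of the form `p ∘ α'`) has finite index in `π₁(X, x₀)` is a covering
map. -/
theorem stmt_15 {X' X : Type*} [TopologicalSpace X'] [TopologicalSpace X]
    [PathConnectedSpace X'] [LocallyPathConnectedSpace X]
    (p : X' → X) (hp : IsLocalHomeomorph p) (hsurj : Function.Surjective p)
    (hpl : PathLifting p) (hupl : UniquePathLifting p)
    (x'₀ : X') (x₀ : X) (hx'₀ : p x'₀ = x₀)
    (H : Subgroup (FundamentalGroup X x₀))
    (hH : ∀ g : FundamentalGroup X x₀, g ∈ H ↔
      ∃ α' : Path x'₀ x'₀, g = FundamentalGroup.fromPath (X := TopCat.of X)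
        ⟦(α'.map hp.continuous).cast hx'₀.symm hx'₀.symm⟧)
    (hfin : H.FiniteIndex) :
    IsCoveringMap p := by
  have : Finite (p ⁻¹' {x₀}) := finite_fiber_of_finiteIndex hp hpl hupl hx'₀ H hH
  intro x
  obtain ⟨z, rfl⟩ := hsurj x
  have : Nonempty (p ⁻¹' {p z}) := ⟨⟨z, rfl⟩⟩
  have : Finite (p ⁻¹' {p z}) :=
    finite_fiber_of_joined hpl hupl (hx'₀ ▸ (PathConnectedSpace.joined z x'₀).map hp.continuous)
  exact isEvenlyCovered_of_finite_fiber hp hpl hupl (p z)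
end

section
/- Every finite sheeted semicovering map onto a locally path connected space is a covering map. -/
/-!
Over a point `x₀` with finite fiber, intersect the targets of charts around the finitely many
points of the fiber and take the path component `V` of `x₀` in this open set; `V` is open since
the base is locally path connected. A lift of a path in `V` that starts in one of these charts
stays in it, by unique path lifting. Lifting a path in `V` from any point over `V` to `x₀` then
shows that the preimage of `V` is the disjoint union of the chart sheets over `V`.
-/

open unitInterval

open Set Topology

theorem OpenPartialHomeomorph.isOpen_iff_isOpen_source_inter_preimage {X Y : Type*}
    [TopologicalSpace X] [TopologicalSpace Y] (e : OpenPartialHomeomorph X Y) {t : Set Y}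
    (ht : t ⊆ e.target) : IsOpen t ↔ IsOpen (e.source ∩ e ⁻¹' t) := by
  rw [← e.symm_image_eq_source_inter_preimage ht, e.isOpen_symm_image_iff_of_subset_target ht]

section

variable {X' X : Type*} [TopologicalSpace X'] [TopologicalSpace X] {p : X' → X}

theorem UniquePathLifting.mem_source_one_of_mem_source_zero (hupl : UniquePathLifting p)
    (hpc : Continuous p) {φ : OpenPartialHomeomorph X' X} (hφ : p = φ) {g : C(I, X')}
    (hg : ∀ t, p (g t) ∈ φ.target) (h0 : g 0 ∈ φ.source) : g 1 ∈ φ.source := by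
  subst hφ
  let sheetLift : C(I, X') := ⟨fun t ↦ φ.symm (φ (g t)),
    φ.continuousOn_symm.comp_continuous (hpc.comp g.continuous) hg⟩
  have hlift : sheetLift = g :=
    hupl _ _ (fun t ↦ φ.right_inv (hg t)) (φ.left_inv h0)
  rw [← hlift]
  exact φ.map_target (hg 1)

theorem UniquePathLifting.mem_source_zero_iff_one (hupl : UniquePathLifting p)
    (hpc : Continuous p) {φ : OpenPartialHomeomorph X' X} (hφ : p = φ) {g : C(I, X')}
    (hg : ∀ t, p (g t) ∈ φ.target) : g 0 ∈ φ.source ↔ g 1 ∈ φ.source := by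
  refine ⟨hupl.mem_source_one_of_mem_source_zero hpc hφ hg, fun h1 ↦ ?_⟩
  let reversed : C(I, X') := g.comp ⟨σ, continuous_symm⟩
  simpa [reversed] using
    hupl.mem_source_one_of_mem_source_zero hpc hφ (g := reversed) (fun t ↦ hg _)
      (by simpa [reversed] using h1)

theorem PathLifting.exists_lift_of_isPathConnected (hpl : PathLifting p) {V : Set X}
    (hV : IsPathConnected V) {x₀ : X} (hx₀ : x₀ ∈ V) {z : X'} (hz : p z ∈ V) :
    ∃ g : C(I, X'), g 0 = z ∧ p (g 1) = x₀ ∧ ∀ t, p (g t) ∈ V := by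
  obtain ⟨γ, hγ⟩ := hV.joinedIn _ hz _ hx₀
  obtain ⟨g, hg, hg0⟩ := hpl γ z (by simp)
  exact ⟨g, hg0, by simp [hg], fun t ↦ (hg t).symm ▸ hγ t⟩

variable (hpc : Continuous p) (hpl : PathLifting p) (hupl : UniquePathLifting p)
  {x₀ : X} {V : Set X} (hV : IsPathConnected V) (hx₀ : x₀ ∈ V)
  {φ : p ⁻¹' {x₀} → OpenPartialHomeomorph X' X} (hφ : ∀ y, p = φ y)
  (hyφ : ∀ y, ↑y ∈ (φ y).source) (hVφ : ∀ y, V ⊆ (φ y).target)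
include hpc hpl hupl hV hx₀ hφ hyφ hVφ

theorem exists_mem_chart_source_of_mem_preimage {z : X'} (hz : p z ∈ V) :
    ∃ y, z ∈ (φ y).source := by
  obtain ⟨g, rfl, hg1, hgV⟩ := hpl.exists_lift_of_isPathConnected hV hx₀ hz
  exact ⟨⟨g 1, hg1⟩, (hupl.mem_source_zero_iff_one hpc (hφ _) fun t ↦ hVφ _ (hgV t)).2 (hyφ _)⟩

theorem eq_of_mem_chart_source {z : X'} (hz : p z ∈ V) {y y' : p ⁻¹' {x₀}}
    (hzy : z ∈ (φ y).source) (hzy' : z ∈ (φ y').source) : y = y' := by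
  obtain ⟨g, rfl, hg1, hgV⟩ := hpl.exists_lift_of_isPathConnected hV hx₀ hz
  have hend : ∀ y, g 0 ∈ (φ y).source → g 1 = y := fun y h ↦
    (φ y).injOn ((hupl.mem_source_zero_iff_one hpc (hφ y) fun t ↦ hVφ y (hgV t)).1 h) (hyφ y)
      (by rw [← hφ]; exact hg1.trans y.2.symm)
  exact Subtype.ext ((hend y hzy).symm.trans (hend y' hzy'))

theorem isEvenlyCovered_of_isOpen_isPathConnected (hVo : IsOpen V) :
    IsEvenlyCovered p x₀ (p ⁻¹' {x₀}) := by
  have : DiscreteTopology (p ⁻¹' {x₀}) :=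
    (IsDiscrete.of_openPartialHomeomorph p subset_rfl
      fun y hy ↦ ⟨φ ⟨y, hy⟩, hyφ _, (hφ _).symm⟩).1
  rcases isEmpty_or_nonempty (p ⁻¹' {x₀}) with hF | hF
  · refine .of_preimage_eq_empty _ (hVo.mem_nhds hx₀) (eq_empty_of_forall_notMem fun z hz ↦ ?_)
    obtain ⟨y, -⟩ := exists_mem_chart_source_of_mem_preimage hpc hpl hupl hV hx₀ hφ hyφ hVφ hz
    exact hF.elim y
  have : Nonempty (X → X') := ⟨fun _ ↦ (Classical.arbitrary (p ⁻¹' {x₀})).1⟩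
  refine .of_trivialization (t := hVo.trivializationDiscrete (fun y ↦ (φ y).source ∩ p ⁻¹' V) V
    (fun y W hWV ↦ ?_) (fun y ↦ ?_) (fun y v hv ↦ ?_) (fun y y' hyy' ↦ ?_) (fun z hz ↦ ?_)) hx₀
  · rw [(φ y).isOpen_iff_isOpen_source_inter_preimage (hWV.trans (hVφ y)), ← hφ,
      inter_left_comm, inter_eq_left.2 (preimage_mono hWV)]
  · exact fun a ha b hb hab ↦ (φ y).injOn ha.1 hb.1 (by rwa [← hφ y])
  · have hpv : p ((φ y).symm v) = v := by rw [hφ y, (φ y).right_inv (hVφ y hv)]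
    exact ⟨(φ y).symm v, ⟨(φ y).map_target (hVφ y hv), mem_preimage.2 (hpv.symm ▸ hv)⟩, hpv⟩
  · refine disjoint_left.2 fun z hz hz' ↦ hyy' ?_
    exact eq_of_mem_chart_source hpc hpl hupl hV hx₀ hφ hyφ hVφ hz.2 hz.1 hz'.1
  · obtain ⟨y, hy⟩ := exists_mem_chart_source_of_mem_preimage hpc hpl hupl hV hx₀ hφ hyφ hVφ hz
    exact mem_iUnion.2 ⟨y, hy, hz⟩

end

theorem stmt_16_general {X' X : Type*} [TopologicalSpace X'] [TopologicalSpace X]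
    [LocallyPathConnectedSpace X]
    (p : X' → X) (hp : IsLocalHomeomorph p)
    (hpl : PathLifting p) (hupl : UniquePathLifting p)
    (hfin : ∀ x : X, (p ⁻¹' {x}).Finite) :
    IsCoveringMap p := by
  intro x₀
  have : Finite (p ⁻¹' {x₀}) := (hfin x₀).to_subtype
  choose φ hyφ hφ using fun y : p ⁻¹' {x₀} ↦ hp y
  let W := ⋂ y, (φ y).target
  have hx₀W : x₀ ∈ W := mem_iInter.2 fun y ↦ by
    have h := (φ y).map_source (hyφ y)
    rwa [← hφ y, mem_singleton_iff.1 y.2] at h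
  exact isEvenlyCovered_of_isOpen_isPathConnected hp.continuous hpl hupl
    (isPathConnected_pathComponentIn hx₀W) (mem_pathComponentIn_self hx₀W) hφ hyφ
    (fun y ↦ pathComponentIn_subset.trans (iInter_subset _ y))
    ((isOpen_iInter_of_finite fun y ↦ (φ y).open_target).pathComponentIn x₀)

/-- every finite sheeted semicovering map onto a locally path
connected space is a covering map. -/
theorem stmt_16 {X' X : Type*} [TopologicalSpace X'] [TopologicalSpace X]
    [PathConnectedSpace X'] [LocallyPathConnectedSpace X]
    (p : X' → X) (hp : IsLocalHomeomorph p) (hsurj : Function.Surjective p)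
    (hpl : PathLifting p) (hupl : UniquePathLifting p)
    (hfin : ∀ x : X, (p ⁻¹' {x}).Finite) :
    IsCoveringMap p :=
  stmt_16_general p hp hpl hupl hfin
end

section
/- Let p : X̃ → X be a local homeomorphism with the path lifting and unique path lifting properties, where X̃ is Hausdorff. Suppose F : [0,1]×[0,1] → X is continuous and f̃ : [0,1] → X̃ is continuous with p ∘ f̃(t) = F(t,0) for all t. Then there exists a unique continuous F̃ : [0,1]×[0,1] → X̃ with p ∘ F̃ = F and F̃(t,0) = f̃(t) for all t ∈ [0,1]. -/
/-
Lift every vertical path `s ↦ F (t, s)` from `f' t`. The resulting map is continuous: near any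
vertical segment, `IsLocalHomeomorph.exists_lift_nhds` (a Lebesgue-number argument along the
segment) produces a lift that is continuous on a whole tube around it and starts on `f'`;
by unique path lifting it agrees with ours on every vertical path in that tube. Uniqueness of the
lifted homotopy is again unique path lifting, one vertical path at a time.
-/

open unitInterval

section

variable {E X A : Type*} [TopologicalSpace E] [TopologicalSpace X] [TopologicalSpace A]
  {p : E → X}

theorem UniquePathLifting.continuous_lift_s19 (hp : IsLocalHomeomorph p) (hupl : UniquePathLifting p)
    (f : C(I × A, X)) {g : I × A → E} (g_lifts : p ∘ g = f) (cont_0 : Continuous (g ⟨0, ·⟩))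
    (cont_A : ∀ a, Continuous (g ⟨·, a⟩)) : Continuous g := by
  rw [continuous_iff_continuousAt]
  rintro ⟨t, a⟩
  obtain ⟨N, haN, g', cont_g', g'_lifts, g'_0, -⟩ :=
    hp.exists_lift_nhds g_lifts cont_0 a (cont_A a)
  refine (cont_g'.congr fun ⟨t, b⟩ ⟨_, hb⟩ ↦ ?_).continuousAt (prod_mem_nhds Filter.univ_mem haN)
  have := hupl ⟨(g ⟨·, b⟩), cont_A b⟩
    ⟨(g' ⟨·, b⟩), cont_g'.comp_continuous (.prodMk_left b) fun _ ↦ ⟨⟨⟩, hb⟩⟩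
    (fun s ↦ congr_fun (g_lifts.trans g'_lifts.symm) (s, b)) (g'_0 b).symm
  exact congr($this t)

theorem UniquePathLifting.eq_of_lifts_homotopy (hupl : UniquePathLifting p)
    {G₁ G₂ : C(I × A, E)} (h : ∀ z, p (G₁ z) = p (G₂ z)) (h_0 : ∀ a, G₁ (0, a) = G₂ (0, a)) :
    G₁ = G₂ := by
  ext ⟨t, a⟩
  let ι : C(I, I × A) := ⟨(·, a), by fun_prop⟩
  exact congr($(hupl (G₁.comp ι) (G₂.comp ι) (fun s ↦ h (s, a)) (h_0 a)) t)

theorem PathLifting.exists_lift_homotopy (hp : IsLocalHomeomorph p) (hpl : PathLifting p)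
    (hupl : UniquePathLifting p) (F : C(I × A, X)) (f' : C(A, E))
    (hf' : ∀ a, p (f' a) = F (0, a)) :
    ∃ G : C(I × A, E), (∀ z, p (G z) = F z) ∧ ∀ a, G (0, a) = f' a := by
  choose Γ Γ_lifts Γ_0 using fun a ↦ hpl (F.comp ⟨(·, a), by fun_prop⟩) (f' a) (hf' a)
  have cont : Continuous fun z : I × A ↦ Γ z.2 z.1 := by
    refine hupl.continuous_lift_s19 hp F (funext fun z ↦ Γ_lifts z.2 z.1) ?_ fun a ↦ (Γ a).continuous
    simpa only [Γ_0] using f'.continuous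
  exact ⟨⟨_, cont⟩, fun z ↦ Γ_lifts z.2 z.1, Γ_0⟩

end

theorem stmt_19_general {X' X : Type*} [TopologicalSpace X'] [TopologicalSpace X]
    (p : X' → X) (hp : IsLocalHomeomorph p)
    (hpl : PathLifting p) (hupl : UniquePathLifting p)
    (F : C(I × I, X)) (f' : C(I, X'))
    (hf' : ∀ t : I, p (f' t) = F (t, 0)) :
    ∃! F' : C(I × I, X'),
      (∀ z : I × I, p (F' z) = F z) ∧ ∀ t : I, F' (t, 0) = f' t := by
  let swap : C(I × I, I × I) := .prodSwap
  obtain ⟨G, G_lifts, G_0⟩ := hpl.exists_lift_homotopy hp hupl (F.comp swap) f' hf'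
  refine ⟨G.comp swap, ⟨fun z ↦ G_lifts z.swap, G_0⟩, fun F' ⟨F'_lifts, F'_0⟩ ↦ ?_⟩
  have : F'.comp swap = G :=
    hupl.eq_of_lifts_homotopy (fun z ↦ (F'_lifts z.swap).trans (G_lifts z).symm)
      fun a ↦ (F'_0 a).trans (G_0 a).symm
  rw [← this]
  rfl

/-- homotopy lifting theorem for a local homeomorphism with the
path lifting and unique path lifting properties and Hausdorff domain: a
homotopy `F : I × I → X` lifts uniquely once a lift `f'` of its bottom edge
is prescribed. -/
theorem stmt_19 {X' X : Type*} [TopologicalSpace X'] [TopologicalSpace X]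
    [T2Space X'] (p : X' → X) (hp : IsLocalHomeomorph p)
    (hpl : PathLifting p) (hupl : UniquePathLifting p)
    (F : C(I × I, X)) (f' : C(I, X'))
    (hf' : ∀ t : I, p (f' t) = F (t, 0)) :
    ∃! F' : C(I × I, X'),
      (∀ z : I × I, p (F' z) = F z) ∧ ∀ t : I, F' (t, 0) = f' t :=
  stmt_19_general p hp hpl hupl F f' hf'
end
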